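/- Fix a finite alphabet K, genome length n, X = (Fin n → K); for each i ∈ Fin n let A_i = (α_i(a,b)) be a connected infinitesimal matrix on K (irreducible: any letter reachable from any other through transitions of positive intensity) with strictly positive stationary distribution q_i; fix κ ≥ 0 and for each I ⊆ Fin n a symmetric nonnegative similarity function φ on pairs of I-substrings. Let μ : ℝ → (X → ℝ) be a differentiable family of strictly positive probability measures solving dμ(x)/dt = ∑_i ∑_{y_i} ( α_i(y_i,x_i)·μ(x_{Λ∖i}, y_i) − α_i(x_i,y_i)·μ(x) ) + κ·∑_{I⊆Λ} ∑_{y_I} ( φ(y_I,x_I)·μ_I(x_I)·μ(x_{Λ∖I}, y_I) − φ(x_I,y_I)·μ_I(y_I)·μ(x) ). Then at every time t with μ(t) ≠ q_Λ, where q_Λ(x) = ∏_i q_i(x_i), the relative entropy D(μ(t)|q_Λ) = ∑_x μ(t)(x)·ln(μ(t)(x)/q_Λ(x)) has strictly negative time derivative. -/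

import Mathlib

/-!
Mutation at site `i` and recombination on `I` are both jump processes whose moves can be
undone by a single move. For such a process with a stationary measure `ν`, reindexing the
inflow by the reversing move writes the entropy production `∑ₓ (dμ/dt)(x) · ln (μ x / ν x)`
as `-∑ c(x,a) ν(x) f(y) klFun (f x / f y)` with `f = μ / ν` and `y` the target of the move,
which is `≤ 0`, and `< 0` as soon as some move of positive rate changes `f`.

The product measure `q_Λ` is stationary for every mutation process. Recombination on `I`, with
rates frozen at the current population `μ`, has the stationary measure `μ_I ⊗ q_{Λ∖I}`; its
log-density relative to `q_Λ` depends on `x_I` only, and recombination preserves the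
`I`-marginal, so recombination too does not increase `D(μ|q_Λ)`. Strictness comes from
mutation: by irreducibility, if `μ ≠ q_Λ` some mutation of positive rate changes `μ / q_Λ`.
Finally `d/dt D(μ|q_Λ) = ∑ₓ (dμ/dt)(x) (ln (μ x / q_Λ x) + 1)`, and the `+ 1` drops out by
conservation of mass.
-/

/-- The substring of a genome `x : Fin n → K` on a subset `I` of positions. -/
def subword {K : Type*} {n : ℕ} (I : Finset (Fin n)) (x : Fin n → K) : ↥I → K :=
  fun i => x i.1

/-- The marginal distribution of a measure `μ` on the genome space on a subset `I`. -/
def marginal {K : Type*} [Fintype K] [DecidableEq K] {n : ℕ}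
    (μ : (Fin n → K) → ℝ) (I : Finset (Fin n)) (a : ↥I → K) : ℝ :=
  ∑ x : Fin n → K, if subword I x = a then μ x else 0

/-- `(x_{Λ∖I}, a)`: the genome obtained from `x` by replacing its restriction to `I`
with `a`. -/
def substGenome {K : Type*} {n : ℕ} (I : Finset (Fin n)) (x : Fin n → K) (a : ↥I → K) :
    Fin n → K :=
  fun j => if h : j ∈ I then a ⟨j, h⟩ else x j

/-- The right-hand side of the mutation–recombination equation. -/
def mutRecRHS {K : Type*} [Fintype K] [DecidableEq K] {n : ℕ}
    (α : Fin n → K → K → ℝ) (κ : ℝ)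
    (φ : (I : Finset (Fin n)) → (↥I → K) → (↥I → K) → ℝ)
    (μ : (Fin n → K) → ℝ) (x : Fin n → K) : ℝ :=
  (∑ i : Fin n, ∑ b : K,
      (α i b (x i) * μ (Function.update x i b) - α i (x i) b * μ x))
  + κ * ∑ I : Finset (Fin n), ∑ a : ↥I → K,
      (φ I a (subword I x) * marginal μ I (subword I x) * μ (substGenome I x a)
        - φ I (subword I x) a * marginal μ I a * μ x)

open Finset Real InformationTheory

lemma sum_sum_eq_zero_of_antisymm {A : Type*} [Fintype A] {F : A → A → ℝ}
    (hF : ∀ a b, F a b = -F b a) : ∑ a, ∑ b, F a b = 0 := by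
  have h : ∑ a, ∑ b, F a b = -∑ a, ∑ b, F a b := by
    conv_lhs => rw [sum_comm]
    simp only [← sum_neg_distrib]
    exact sum_congr rfl fun b _ => sum_congr rfl fun a _ => hF a b
  linarith

lemma hasDerivAt_sum_mul_log_div {S : Type*} [Fintype S] {μ : ℝ → S → ℝ} {μ' ν : S → ℝ}
    {t : ℝ} (hμ : ∀ x, μ t x ≠ 0) (hν : ∀ x, ν x ≠ 0)
    (hderiv : ∀ x, HasDerivAt (fun s => μ s x) (μ' x) t) :
    HasDerivAt (fun s => ∑ x, μ s x * log (μ s x / ν x))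
      (∑ x, μ' x * (log (μ t x / ν x) + 1)) t := by
  refine HasDerivAt.fun_sum fun x _ => ?_
  have hlog := ((hderiv x).div_const (ν x)).log (div_ne_zero (hμ x) (hν x))
  refine ((hderiv x).mul hlog).congr_deriv ?_
  field_simp [hμ x, hν x]

section JumpProcess

variable {S A : Type*}

/-- `ρ x a` is a move from `τ x a` back to `x`, and is in turn reversed by `a`. -/
def IsMoveReversal (τ : S → A → S) (ρ : S → A → A) : Prop :=
  Function.Involutive fun p : S × A => (τ p.1 p.2, ρ p.1 p.2)

variable {τ : S → A → S} {ρ : S → A → A} {c : S → A → ℝ} {μ ν : S → ℝ}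

lemma mul_klFun_ratio_nonneg (hc : ∀ x a, τ x a ≠ x → 0 ≤ c x a) (hν : ∀ x, 0 < ν x)
    (hμ : ∀ x, 0 < μ x) (x : S) (a : A) :
    0 ≤ c x a * ν x * (μ (τ x a) / ν (τ x a)) * klFun (μ x / ν x / (μ (τ x a) / ν (τ x a))) := by
  by_cases hx : τ x a = x
  · simp [hx, div_self (div_pos (hμ x) (hν x)).ne', klFun_one]
  · have hy := div_pos (hμ (τ x a)) (hν (τ x a))
    exact mul_nonneg (mul_nonneg (mul_nonneg (hc x a hx) (hν x).le) hy.le)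
      (klFun_nonneg (div_pos (div_pos (hμ x) (hν x)) hy).le)

variable [Fintype S] [Fintype A]

lemma IsMoveReversal.sum_sum_comp (hτρ : IsMoveReversal τ ρ) (F : S → A → ℝ) :
    ∑ x, ∑ a, F (τ x a) (ρ x a) = ∑ x, ∑ a, F x a := by
  simp only [← Fintype.sum_prod_type']
  exact Equiv.sum_comp (hτρ.toPerm _) (fun p => F p.1 p.2)

variable (τ ρ) in
/-- Right-hand side of the master equation of the jump process on `S` in which move `a`
leads from `x` to `τ x a` at rate `c x a`. -/
def jumpRHS (c : S → A → ℝ) (μ : S → ℝ) (x : S) : ℝ :=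
  ∑ a, (c (τ x a) (ρ x a) * μ (τ x a) - c x a * μ x)

lemma sum_jumpRHS_mul (hτρ : IsMoveReversal τ ρ) (c : S → A → ℝ) (μ h : S → ℝ) :
    ∑ x, jumpRHS τ ρ c μ x * h x = ∑ x, ∑ a, c x a * μ x * (h (τ x a) - h x) := by
  have hback := hτρ.sum_sum_comp fun x a => c x a * μ x * h (τ x a)
  have hinv : ∀ x a, τ (τ x a) (ρ x a) = x := fun x a => congrArg Prod.fst (hτρ (x, a))
  simp only [hinv] at hback
  simp only [jumpRHS, sum_mul, sub_mul, mul_sub, sum_sub_distrib, hback]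

lemma sum_jumpRHS (hτρ : IsMoveReversal τ ρ) (c : S → A → ℝ) (μ : S → ℝ) :
    ∑ x, jumpRHS τ ρ c μ x = 0 := by
  simpa using sum_jumpRHS_mul hτρ c μ 1

lemma sum_jumpRHS_mul_log_div (hτρ : IsMoveReversal τ ρ) (hν : ∀ x, 0 < ν x)
    (hstat : ∀ x, jumpRHS τ ρ c ν x = 0) (hμ : ∀ x, 0 < μ x) :
    ∑ x, jumpRHS τ ρ c μ x * log (μ x / ν x) =
      -∑ x, ∑ a, c x a * ν x * (μ (τ x a) / ν (τ x a))
        * klFun (μ x / ν x / (μ (τ x a) / ν (τ x a))) := by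
  have hflux : ∑ x, ∑ a, c x a * (ν x * (μ (τ x a) / ν (τ x a)) - μ x) = 0 := by
    have h := sum_jumpRHS_mul hτρ c ν fun x => μ x / ν x
    simp only [hstat, zero_mul, sum_const_zero] at h
    rw [h]
    refine sum_congr rfl fun x _ => sum_congr rfl fun a _ => ?_
    rw [mul_assoc, mul_sub (ν x), mul_div_cancel₀ _ (hν x).ne']
  rw [sum_jumpRHS_mul hτρ, eq_neg_iff_add_eq_zero, ← hflux, ← sum_add_distrib]
  refine sum_congr rfl fun x _ => ?_
  rw [← sum_add_distrib]
  refine sum_congr rfl fun a _ => ?_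
  rw [klFun_apply, log_div (div_pos (hμ x) (hν x)).ne' (div_pos (hμ _) (hν _)).ne']
  field_simp [(hμ x).ne', (hν x).ne', (hμ (τ x a)).ne', (hν (τ x a)).ne']
  ring

lemma sum_jumpRHS_mul_log_div_nonpos (hτρ : IsMoveReversal τ ρ)
    (hc : ∀ x a, τ x a ≠ x → 0 ≤ c x a) (hν : ∀ x, 0 < ν x)
    (hstat : ∀ x, jumpRHS τ ρ c ν x = 0) (hμ : ∀ x, 0 < μ x) :
    ∑ x, jumpRHS τ ρ c μ x * log (μ x / ν x) ≤ 0 := by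
  rw [sum_jumpRHS_mul_log_div hτρ hν hstat hμ, neg_nonpos]
  exact sum_nonneg fun x _ => sum_nonneg fun a _ => mul_klFun_ratio_nonneg hc hν hμ x a

lemma sum_jumpRHS_mul_log_div_neg (hτρ : IsMoveReversal τ ρ)
    (hc : ∀ x a, τ x a ≠ x → 0 ≤ c x a) (hν : ∀ x, 0 < ν x)
    (hstat : ∀ x, jumpRHS τ ρ c ν x = 0) (hμ : ∀ x, 0 < μ x)
    (hmove : ∃ x a, 0 < c x a ∧ μ (τ x a) / ν (τ x a) ≠ μ x / ν x) :
    ∑ x, jumpRHS τ ρ c μ x * log (μ x / ν x) < 0 := by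
  obtain ⟨x, a, hcxa, hratio⟩ := hmove
  have hy := div_pos (hμ (τ x a)) (hν (τ x a))
  have hr := div_pos (div_pos (hμ x) (hν x)) hy
  have hgap : 0 < klFun (μ x / ν x / (μ (τ x a) / ν (τ x a))) := by
    refine (klFun_nonneg hr.le).lt_of_ne' fun h => hratio ?_
    rw [klFun_eq_zero_iff hr.le, div_eq_one_iff_eq hy.ne'] at h
    exact h.symm
  rw [sum_jumpRHS_mul_log_div hτρ hν hstat hμ, neg_lt_zero]
  refine sum_pos' (fun x _ => sum_nonneg fun a _ => mul_klFun_ratio_nonneg hc hν hμ x a)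
    ⟨x, mem_univ x, sum_pos' (fun a _ => mul_klFun_ratio_nonneg hc hν hμ x a) ⟨a, mem_univ a, ?_⟩⟩
  exact mul_pos (mul_pos (mul_pos hcxa (hν x)) hy) hgap

end JumpProcess

section Genome

variable {K : Type*} {n : ℕ}

@[simp]
lemma subword_substGenome (I : Finset (Fin n)) (x : Fin n → K) (a : ↥I → K) :
    subword I (substGenome I x a) = a := by
  funext j
  simp [subword, substGenome, j.2]

lemma substGenome_of_notMem {I : Finset (Fin n)} (x : Fin n → K) (a : ↥I → K) {j : Fin n}
    (hj : j ∉ I) : substGenome I x a j = x j := by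
  simp [substGenome, hj]

lemma isMoveReversal_update (i : Fin n) :
    IsMoveReversal (fun (x : Fin n → K) b => Function.update x i b) (fun x _ => x i) := by
  rintro ⟨x, b⟩
  simp

lemma isMoveReversal_substGenome (I : Finset (Fin n)) :
    IsMoveReversal (substGenome (K := K) I) (fun x _ => subword I x) := by
  rintro ⟨x, a⟩
  ext j
  · by_cases hj : j ∈ I <;> simp [substGenome, subword, hj]
  · simp

lemma apply_eq_of_forall_update_eq {β : Type*} {g : (Fin n → K) → β}
    (hg : ∀ x i b, g (Function.update x i b) = g x) (x y : Fin n → K) : g x = g y := by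
  suffices ∀ s : Finset (Fin n), ∀ x, (∀ j ∉ s, x j = y j) → g x = g y from
    this univ x fun j hj => absurd (mem_univ j) hj
  intro s
  induction s using Finset.induction_on with
  | empty => exact fun x hx => congrArg g (funext fun j => hx j (notMem_empty j))
  | insert i s _ ih =>
    intro x hx
    rw [← hg x i (y i)]
    refine ih _ fun j hj => ?_
    by_cases hji : j = i
    · subst hji
      simp
    · rw [Function.update_of_ne hji]
      exact hx j (by simp [hji, hj])

lemma prod_update_eq_mul (q : Fin n → K → ℝ) (x : Fin n → K) (i : Fin n) (b : K) :
    ∏ j, q j (Function.update x i b j) = q i b * ∏ j ∈ {i}ᶜ, q j (x j) := by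
  rw [Fintype.prod_eq_mul_prod_compl i, Function.update_self]
  congr 1
  exact prod_congr rfl fun j hj => by rw [Function.update_of_ne (by simpa using hj)]

variable [Fintype K] [DecidableEq K]

lemma sum_subword_mul (I : Finset (Fin n)) (F : (↥I → K) → ℝ) (p : (Fin n → K) → ℝ) :
    ∑ x, F (subword I x) * p x = ∑ a, F a * marginal p I a := by
  simp only [marginal, mul_sum, mul_ite, mul_zero]
  rw [sum_comm]
  simp

lemma marginal_nonneg {p : (Fin n → K) → ℝ} (hp : ∀ x, 0 ≤ p x) (I : Finset (Fin n))
    (a : ↥I → K) : 0 ≤ marginal p I a :=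
  sum_nonneg fun x _ => by split_ifs <;> simp [hp x]

lemma marginal_subword_pos {p : (Fin n → K) → ℝ} (hp : ∀ x, 0 < p x) (I : Finset (Fin n))
    (x : Fin n → K) : 0 < marginal p I (subword I x) :=
  sum_pos' (fun y _ => by split_ifs <;> simp [(hp y).le]) ⟨x, mem_univ x, by simp [hp x]⟩

end Genome

section MutationRecombination

variable {K : Type*} [Fintype K] [DecidableEq K] {n : ℕ}

def mutationRHS (α : Fin n → K → K → ℝ) (i : Fin n) (μ : (Fin n → K) → ℝ) :
    (Fin n → K) → ℝ :=
  jumpRHS (fun x b => Function.update x i b) (fun x _ => x i) (fun x b => α i (x i) b) μ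

/-- Recombination on `I` with rates drawn from the population `p`, applied to `μ`. -/
def recombinationRHS (φ : (I : Finset (Fin n)) → (↥I → K) → (↥I → K) → ℝ)
    (I : Finset (Fin n)) (p μ : (Fin n → K) → ℝ) : (Fin n → K) → ℝ :=
  jumpRHS (substGenome I) (fun x _ => subword I x)
    (fun x a => φ I (subword I x) a * marginal p I a) μ

variable (α : Fin n → K → K → ℝ) (κ : ℝ) (φ : (I : Finset (Fin n)) → (↥I → K) → (↥I → K) → ℝ)

lemma mutRecRHS_eq (p : (Fin n → K) → ℝ) (x : Fin n → K) :
    mutRecRHS α κ φ p x =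
      ∑ i, mutationRHS α i p x + κ * ∑ I, recombinationRHS φ I p p x := by
  simp [mutRecRHS, mutationRHS, recombinationRHS, jumpRHS]

lemma sum_mutRecRHS_mul (p h : (Fin n → K) → ℝ) :
    ∑ x, mutRecRHS α κ φ p x * h x =
      ∑ i, ∑ x, mutationRHS α i p x * h x + κ * ∑ I, ∑ x, recombinationRHS φ I p p x * h x := by
  simp only [mutRecRHS_eq, add_mul, sum_add_distrib, sum_mul, mul_sum, mul_assoc]
  rw [sum_comm, sum_comm (s := univ) (t := univ) (f := fun x I => κ * _)]

lemma sum_mutRecRHS (p : (Fin n → K) → ℝ) : ∑ x, mutRecRHS α κ φ p x = 0 := by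
  simpa [mutationRHS, recombinationRHS, sum_jumpRHS (isMoveReversal_update _),
    sum_jumpRHS (isMoveReversal_substGenome _)] using sum_mutRecRHS_mul α κ φ p 1

end MutationRecombination

section Irreducibility

variable {K : Type*} [Fintype K] {n : ℕ} {α : Fin n → K → K → ℝ} {q : Fin n → K → ℝ}
  {μ : (Fin n → K) → ℝ}

lemma exists_mutation_ratio_ne
    (hα_conn : ∀ i : Fin n, ∀ a b : K, Relation.ReflTransGen (fun u v => 0 < α i u v) a b)
    (hq_pos : ∀ i a, 0 < q i a) (hq_sum : ∀ i, ∑ a, q i a = 1) (hμ_sum : ∑ x, μ x = 1)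
    (hne : μ ≠ fun x => ∏ j, q j (x j)) :
    ∃ i x b, 0 < α i (x i) b ∧
      μ (Function.update x i b) / ∏ j, q j (Function.update x i b j) ≠ μ x / ∏ j, q j (x j) := by
  by_contra! hflat
  have hupdate : ∀ x i b, μ (Function.update x i b) / ∏ j, q j (Function.update x i b j) =
      μ x / ∏ j, q j (x j) := by
    intro x i b
    induction hα_conn i (x i) b with
    | refl => simp
    | tail _ hcd ih =>
      rw [← ih]
      simpa using hflat i (Function.update x i _) _ (by simpa using hcd)
  obtain ⟨x₀, -⟩ := Function.ne_iff.mp hne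
  have hμ_eq : μ = fun x => μ x₀ / (∏ j, q j (x₀ j)) * ∏ j, q j (x j) := by
    funext x
    rw [← apply_eq_of_forall_update_eq (g := fun x => μ x / ∏ j, q j (x j)) hupdate x x₀,
      div_mul_cancel₀ _ (prod_pos fun j _ => hq_pos j (x j)).ne']
  have hf₀ : μ x₀ / ∏ j, q j (x₀ j) = 1 := by
    rw [hμ_eq, ← mul_sum, ← Fintype.prod_sum] at hμ_sum
    simpa [hq_sum] using hμ_sum
  exact hne (by rw [hμ_eq, hf₀]; simp)

end Irreducibility

section Mutation

variable {K : Type*} [Fintype K] [DecidableEq K] {n : ℕ} {α : Fin n → K → K → ℝ}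
  {q : Fin n → K → ℝ} {μ : (Fin n → K) → ℝ}

lemma sum_eq_zero_of_apply_eq_neg_sum_erase {r : K → ℝ} {a : K}
    (h : r a = -∑ b ∈ univ.erase a, r b) : ∑ b, r b = 0 := by
  rw [← add_sum_erase _ _ (mem_univ a), h, neg_add_cancel]

lemma mutationRHS_prod_eq_zero {i : Fin n}
    (hα_diag : ∀ a : K, α i a a = -∑ b ∈ univ.erase a, α i a b)
    (hq_stat : ∀ b : K, ∑ a, q i a * α i a b = 0) (x : Fin n → K) :
    mutationRHS α i (fun y => ∏ j, q j (y j)) x = 0 := by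
  simp only [mutationRHS, jumpRHS, Function.update_self, sum_sub_distrib, ← sum_mul,
    sum_eq_zero_of_apply_eq_neg_sum_erase (hα_diag (x i)), zero_mul, sub_zero,
    prod_update_eq_mul q x i]
  calc ∑ b, α i b (x i) * (q i b * ∏ j ∈ {i}ᶜ, q j (x j))
      = (∑ b, q i b * α i b (x i)) * ∏ j ∈ {i}ᶜ, q j (x j) := by
        rw [sum_mul]
        exact sum_congr rfl fun b _ => by ring
    _ = 0 := by rw [hq_stat, zero_mul]

lemma sum_mutationRHS_mul_log_nonpos {i : Fin n} (hα_off : ∀ a b : K, a ≠ b → 0 ≤ α i a b)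
    (hα_diag : ∀ a : K, α i a a = -∑ b ∈ univ.erase a, α i a b)
    (hq_stat : ∀ b : K, ∑ a, q i a * α i a b = 0) (hq_pos : ∀ j a, 0 < q j a)
    (hμ : ∀ x, 0 < μ x) :
    ∑ x, mutationRHS α i μ x * log (μ x / ∏ j, q j (x j)) ≤ 0 :=
  sum_jumpRHS_mul_log_div_nonpos (isMoveReversal_update i)
    (fun x _ hb => hα_off _ _ fun h => hb (h ▸ Function.update_eq_self i x))
    (fun x => prod_pos fun j _ => hq_pos j (x j))
    (mutationRHS_prod_eq_zero hα_diag hq_stat) hμ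

lemma sum_mutationRHS_mul_log_neg {i : Fin n} (hα_off : ∀ a b : K, a ≠ b → 0 ≤ α i a b)
    (hα_diag : ∀ a : K, α i a a = -∑ b ∈ univ.erase a, α i a b)
    (hq_stat : ∀ b : K, ∑ a, q i a * α i a b = 0) (hq_pos : ∀ j a, 0 < q j a)
    (hμ : ∀ x, 0 < μ x)
    (hmove : ∃ x b, 0 < α i (x i) b ∧
      μ (Function.update x i b) / ∏ j, q j (Function.update x i b j) ≠ μ x / ∏ j, q j (x j)) :
    ∑ x, mutationRHS α i μ x * log (μ x / ∏ j, q j (x j)) < 0 :=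
  sum_jumpRHS_mul_log_div_neg (isMoveReversal_update i)
    (fun x _ hb => hα_off _ _ fun h => hb (h ▸ Function.update_eq_self i x))
    (fun x => prod_pos fun j _ => hq_pos j (x j))
    (mutationRHS_prod_eq_zero hα_diag hq_stat) hμ hmove

end Mutation

section Recombination

variable {K : Type*} [Fintype K] [DecidableEq K] {n : ℕ}
  {φ : (I : Finset (Fin n)) → (↥I → K) → (↥I → K) → ℝ} {I : Finset (Fin n)}
  {q : Fin n → K → ℝ} {p : (Fin n → K) → ℝ}

def marginalProd (p : (Fin n → K) → ℝ) (q : Fin n → K → ℝ) (I : Finset (Fin n))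
    (x : Fin n → K) : ℝ :=
  marginal p I (subword I x) * ∏ j ∈ Iᶜ, q j (x j)

lemma recombinationRHS_marginalProd_eq_zero (hφ_symm : ∀ a b, φ I a b = φ I b a)
    (x : Fin n → K) : recombinationRHS φ I p (marginalProd p q I) x = 0 := by
  have hcompl : ∀ a, ∏ j ∈ Iᶜ, q j (substGenome I x a j) = ∏ j ∈ Iᶜ, q j (x j) := fun a =>
    prod_congr rfl fun j hj => by rw [substGenome_of_notMem x a (mem_compl.mp hj)]
  simp only [recombinationRHS, jumpRHS, marginalProd, subword_substGenome, hcompl]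
  exact sum_eq_zero fun a _ => by rw [hφ_symm]; ring

/-- Recombination on `I` leaves the `I`-marginal unchanged. -/
lemma sum_recombinationRHS_mul_subword (hφ_symm : ∀ a b, φ I a b = φ I b a)
    (g : (↥I → K) → ℝ) : ∑ x, recombinationRHS φ I p p x * g (subword I x) = 0 := by
  rw [recombinationRHS, sum_jumpRHS_mul (isMoveReversal_substGenome I)]
  simp only [subword_substGenome]
  calc ∑ x, ∑ a, φ I (subword I x) a * marginal p I a * p x * (g a - g (subword I x))
      = ∑ x, (∑ a, φ I (subword I x) a * marginal p I a * (g a - g (subword I x))) * p x := by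
        simp only [sum_mul]
        exact sum_congr rfl fun x _ => sum_congr rfl fun a _ => by ring
    _ = ∑ b, ∑ a, φ I b a * marginal p I a * (g a - g b) * marginal p I b := by
        rw [sum_subword_mul I (fun b => ∑ a, φ I b a * marginal p I a * (g a - g b)) p]
        simp only [sum_mul]
    _ = 0 := sum_sum_eq_zero_of_antisymm fun b a => by rw [hφ_symm]; ring

lemma log_div_prod_eq (hq_pos : ∀ j a, 0 < q j a) (hp : ∀ x, 0 < p x) (I : Finset (Fin n))
    (x : Fin n → K) :
    log (p x / ∏ j, q j (x j)) = log (p x / marginalProd p q I x)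
      + log (marginal p I (subword I x) / ∏ j : ↥I, q j (subword I x j)) := by
  have hI : ∏ j : ↥I, q j (subword I x j) = ∏ j ∈ I, q j (x j) :=
    prod_coe_sort I fun j => q j (x j)
  have hm := marginal_subword_pos hp I x
  have hqI := prod_pos fun j (_ : j ∈ I) => hq_pos j (x j)
  have hqIc := prod_pos fun j (_ : j ∈ Iᶜ) => hq_pos j (x j)
  rw [hI, marginalProd, ← log_mul (div_pos (hp x) (mul_pos hm hqIc)).ne' (div_pos hm hqI).ne',
    ← prod_mul_prod_compl I]
  field_simp

lemma sum_recombinationRHS_mul_log_nonpos (hφ_symm : ∀ a b, φ I a b = φ I b a)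
    (hφ_nonneg : ∀ a b, 0 ≤ φ I a b) (hq_pos : ∀ j a, 0 < q j a) (hp : ∀ x, 0 < p x) :
    ∑ x, recombinationRHS φ I p p x * log (p x / ∏ j, q j (x j)) ≤ 0 := by
  simp only [log_div_prod_eq hq_pos hp I, mul_add, sum_add_distrib]
  rw [sum_recombinationRHS_mul_subword hφ_symm fun b => log (marginal p I b / ∏ j : ↥I, q j (b j)),
    add_zero]
  exact sum_jumpRHS_mul_log_div_nonpos (isMoveReversal_substGenome I)
    (fun x a _ => mul_nonneg (hφ_nonneg _ _) (marginal_nonneg (fun x => (hp x).le) I a))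
    (fun x => mul_pos (marginal_subword_pos hp I x) (prod_pos fun j _ => hq_pos j (x j)))
    (recombinationRHS_marginalProd_eq_zero hφ_symm) hp

end Recombination

/-- along a strictly positive differentiable solution of the
mutation–recombination equation, the relative entropy `D(μ(t)|q_Λ)` with respect to the
product distribution `q_Λ(x) = ∏_i q_i(x_i)` has strictly negative time derivative at
every time `t` with `μ(t) ≠ q_Λ`. -/
theorem relative_entropy_strictly_decreases
    {K : Type*} [Fintype K] [DecidableEq K] {n : ℕ}
    (α : Fin n → K → K → ℝ)
    (hα_off : ∀ i : Fin n, ∀ a b : K, a ≠ b → 0 ≤ α i a b)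
    (hα_diag : ∀ i : Fin n, ∀ a : K, α i a a = -∑ b ∈ Finset.univ.erase a, α i a b)
    (hα_conn : ∀ i : Fin n, ∀ a b : K,
      Relation.ReflTransGen (fun u v => 0 < α i u v) a b)
    (q : Fin n → K → ℝ)
    (hq_pos : ∀ i a, 0 < q i a)
    (hq_sum : ∀ i, ∑ a, q i a = 1)
    (hq_stat : ∀ i : Fin n, ∀ b : K, ∑ a, q i a * α i a b = 0)
    (κ : ℝ) (hκ : 0 ≤ κ)
    (φ : (I : Finset (Fin n)) → (↥I → K) → (↥I → K) → ℝ)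
    (hφ_symm : ∀ I a b, φ I a b = φ I b a)
    (hφ_nonneg : ∀ I a b, 0 ≤ φ I a b)
    (μ : ℝ → (Fin n → K) → ℝ)
    (hμ_pos : ∀ t x, 0 < μ t x)
    (hμ_sum : ∀ t, ∑ x, μ t x = 1)
    (hμ_ode : ∀ t x, HasDerivAt (fun s => μ s x) (mutRecRHS α κ φ (μ t) x) t)
    (t : ℝ)
    (hne : μ t ≠ fun z => ∏ i, q i (z i)) :
    deriv (fun s => ∑ x, μ s x * Real.log (μ s x / ∏ i, q i (x i))) t < 0 := by
  have hQ : ∀ x : Fin n → K, ∏ i, q i (x i) ≠ 0 := fun x => (prod_pos fun i _ => hq_pos i (x i)).ne'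
  rw [(hasDerivAt_sum_mul_log_div (fun x => (hμ_pos t x).ne') hQ (hμ_ode t)).deriv]
  simp only [mul_add, mul_one, sum_add_distrib, sum_mutRecRHS, add_zero, sum_mutRecRHS_mul]
  obtain ⟨i, hmove⟩ := exists_mutation_ratio_ne hα_conn hq_pos hq_sum (hμ_sum t) hne
  have hmutation : ∑ i, ∑ x, mutationRHS α i (μ t) x * log (μ t x / ∏ j, q j (x j)) < 0 :=
    sum_neg' (fun i _ => sum_mutationRHS_mul_log_nonpos (hα_off i) (hα_diag i) (hq_stat i)
        hq_pos (hμ_pos t))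
      ⟨i, mem_univ i, sum_mutationRHS_mul_log_neg (hα_off i) (hα_diag i) (hq_stat i) hq_pos
        (hμ_pos t) hmove⟩
  have hrecombination : ∑ I, ∑ x, recombinationRHS φ I (μ t) (μ t) x
      * log (μ t x / ∏ j, q j (x j)) ≤ 0 :=
    sum_nonpos fun I _ => sum_recombinationRHS_mul_log_nonpos (hφ_symm I) (hφ_nonneg I) hq_pos
      (hμ_pos t)
  linarith [mul_nonpos_of_nonneg_of_nonpos hκ hrecombination]
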